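/- Let α > 0 and let u be a radial function such that Σ_{k=−∞}^{m} p^k |u(p^k)| < ∞ and Σ_{ℓ=m}^{∞} p^{−αℓ} |u(p^ℓ)| < ∞ for some m ∈ ℤ. Then for every n ∈ ℤ and every x ∈ ℚ_p with |x|_p = p^n the integral defining (D^α u)(x) converges, its value depends only on |x|_p, and (D^α u)(p^n) = d_α (1 − 1/p) p^{−(α+1)n} Σ_{k=−∞}^{n−1} p^k u(p^k) + p^{−αn−1} ((p^α + p − 2)/(1 − p^{−α−1})) u(p^n) + d_α (1 − 1/p) Σ_{ℓ=n+1}^{∞} p^{−αℓ} u(p^ℓ). -/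

import Mathlib

open MeasureTheory Metric

noncomputable section

variable (p : ℕ) [Fact p.Prime]

instance : MeasurableSpace ℚ_[p] := borel _
instance : BorelSpace ℚ_[p] := ⟨rfl⟩

/-- The closed unit ball of `ℚ_[p]` as a positive compact set. -/
def unitBallPC : TopologicalSpace.PositiveCompacts ℚ_[p] where
  carrier := closedBall 0 1
  isCompact' := isCompact_closedBall 0 1
  interior_nonempty' := ⟨0, mem_interior_iff_mem_nhds.2
    (Filter.mem_of_superset (ball_mem_nhds 0 one_pos) ball_subset_closedBall)⟩

/-- The Haar measure on `ℚ_[p]` normalized so the unit ball has measure 1. -/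
def padicHaar : Measure ℚ_[p] := Measure.addHaarMeasure (unitBallPC p)

/-- A point on the sphere of radius `p^k`. -/
def sph (k : ℤ) : ℚ_[p] := (p : ℚ_[p]) ^ (-k)

/-- A function is radial if it depends only on the p-adic absolute value. -/
def Radial (u : ℚ_[p] → ℝ) : Prop := ∀ x y : ℚ_[p], ‖x‖ = ‖y‖ → u x = u y

/-- The integrand of the Vladimirov operator `D^α` at `x`. -/
def Dker (α : ℝ) (u : ℚ_[p] → ℝ) (x : ℚ_[p]) : ℚ_[p] → ℝ :=
  fun y => ‖y‖ ^ (-α - 1) * (u (x - y) - u x)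

/-- The Vladimirov fractional differentiation operator. -/
def Dop (α : ℝ) (u : ℚ_[p] → ℝ) (x : ℚ_[p]) : ℝ :=
  ((1 - (p : ℝ) ^ α) / (1 - (p : ℝ) ^ (-α - 1))) * ∫ y, Dker p α u x y ∂(padicHaar p)

/-- The kernel of the fractional integral `I^α`. -/
def Iker (α : ℝ) (x y : ℚ_[p]) : ℝ :=
  if α = 1 then Real.log ‖x - y‖ - Real.log ‖y‖
  else ‖x - y‖ ^ (α - 1) - ‖y‖ ^ (α - 1)

/-- The constant in front of the fractional integral. -/
def Icoef (α : ℝ) : ℝ :=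
  if α = 1 then (1 - (p : ℝ)) / (p * Real.log p)
  else (1 - (p : ℝ) ^ (-α)) / (1 - (p : ℝ) ^ (α - 1))

/-- The p-adic fractional integral `I^α`. -/
def Iop (α : ℝ) (u : ℚ_[p] → ℝ) (x : ℚ_[p]) : ℝ :=
  Icoef p α * ∫ y in {y : ℚ_[p] | ‖y‖ ≤ ‖x‖}, Iker p α x y * u y ∂(padicHaar p)

end


open Filter Set

section VladAux

variable (p : ℕ) [Fact p.Prime]

private lemma pR1 : 1 < (p : ℝ) := by exact_mod_cast (Fact.out : p.Prime).one_lt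
private lemma pR0 : (0:ℝ) < (p : ℝ) := lt_trans one_pos (pR1 p)

/-- Ball of radius `p^k`. -/
def Bset (k : ℤ) : Set ℚ_[p] := {y | ‖y‖ ≤ (p:ℝ)^k}
/-- Sphere of radius `p^k`. -/
def Sset (k : ℤ) : Set ℚ_[p] := {y | ‖y‖ = (p:ℝ)^k}

lemma measurableSet_Bset (k : ℤ) : MeasurableSet (Bset p k) :=
  measurableSet_le measurable_norm measurable_const

lemma measurableSet_Sset (k : ℤ) : MeasurableSet (Sset p k) :=
  measurableSet_eq_fun measurable_norm measurable_const

lemma norm_sph (k : ℤ) : ‖sph p k‖ = (p:ℝ)^k := by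
  simp [sph, Padic.norm_p_zpow]

lemma exists_norm_zpow {y : ℚ_[p]} (hy : y ≠ 0) : ∃ k : ℤ, ‖y‖ = (p:ℝ)^k :=
  ⟨-y.valuation, Padic.norm_eq_zpow_neg_valuation hy⟩

lemma norm_le_iff_lt {y : ℚ_[p]} {k : ℤ} : ‖y‖ ≤ (p:ℝ)^(k-1) ↔ ‖y‖ < (p:ℝ)^k := by
  constructor
  · intro h; exact lt_of_le_of_lt h (zpow_lt_zpow_right₀ (pR1 p) (by omega))
  · intro h
    rcases eq_or_ne y 0 with rfl | hy
    · simpa using (zpow_pos (pR0 p) (k-1)).le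
    · obtain ⟨j, hj⟩ := exists_norm_zpow p hy
      rw [hj] at h ⊢
      have hjk : j < k := by
        by_contra hc
        exact absurd h (not_lt.2 (zpow_le_zpow_right₀ (pR1 p).le (not_lt.1 hc)))
      exact zpow_le_zpow_right₀ (pR1 p).le (by omega)

lemma norm_sub_eq_left {x y : ℚ_[p]} (h : ‖y‖ < ‖x‖) : ‖x - y‖ = ‖x‖ := by
  rw [sub_eq_add_neg, Padic.add_eq_max_of_ne (by rw [norm_neg]; exact (ne_of_lt h).symm),
    norm_neg]
  exact max_eq_left h.le

instance : (padicHaar p).IsAddHaarMeasure := Measure.isAddHaarMeasure_addHaarMeasure _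

lemma Bset_zero_eq : Bset p 0 = Metric.closedBall 0 1 := by
  ext y; simp [Bset, Metric.mem_closedBall, dist_zero_right]

lemma Bset_succ (k : ℤ) :
    Bset p (k+1) = ⋃ i : Fin p,
      (fun y => (-((i:ℕ):ℚ_[p]) * (p:ℚ_[p])^(-(k+1))) + y) ⁻¹' Bset p k := by
  have hpQ : ((p:ℚ_[p])) ≠ 0 := by
    exact_mod_cast (Nat.cast_ne_zero (R := ℚ_[p])).2 (Fact.out : p.Prime).ne_zero
  ext y
  simp only [mem_iUnion, mem_preimage, Bset, mem_setOf_eq]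
  constructor
  · intro hy
    set t : ℚ_[p] := (p:ℚ_[p])^(k+1) with ht
    have htne : t ≠ 0 := zpow_ne_zero _ hpQ
    have htn : ‖t‖ = (p:ℝ)^(-(k+1)) := Padic.norm_p_zpow _
    have hz : ‖y * t‖ ≤ 1 := by
      rw [norm_mul, htn]
      calc ‖y‖ * (p:ℝ)^(-(k+1)) ≤ (p:ℝ)^(k+1) * (p:ℝ)^(-(k+1)) :=
            mul_le_mul_of_nonneg_right hy (zpow_nonneg (pR0 p).le _)
        _ = 1 := by
            rw [← zpow_add₀ (ne_of_gt (pR0 p)), show k + 1 + -(k + 1) = (0:ℤ) from by ring,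
              zpow_zero]
    set z : ℤ_[p] := ⟨y * t, hz⟩ with hzdef
    refine ⟨⟨z.appr 1, by simpa using z.appr_lt 1⟩, ?_⟩
    have hspec : ‖z - ((z.appr 1 : ℕ) : ℤ_[p])‖ ≤ (p:ℝ)^(-(1:ℕ) : ℤ) := by
      rw [PadicInt.norm_le_pow_iff_mem_span_pow]
      simpa using z.appr_spec 1
    have hcoe : ‖((z - ((z.appr 1 : ℕ) : ℤ_[p]) : ℤ_[p]) : ℚ_[p])‖ ≤ (p:ℝ)^(-1 : ℤ) := by
      rw [PadicInt.padic_norm_e_of_padicInt]; exact_mod_cast hspec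
    have hrw : -((z.appr 1 : ℕ):ℚ_[p]) * (p:ℚ_[p])^(-(k+1)) + y
        = ((z - ((z.appr 1 : ℕ) : ℤ_[p]) : ℤ_[p]) : ℚ_[p]) * t⁻¹ := by
      push_cast
      rw [show (p:ℚ_[p])^(-(k+1)) = t⁻¹ by rw [ht, zpow_neg]]
      field_simp
      ring
    rw [hrw, norm_mul, norm_inv, htn]
    calc ‖((z - ((z.appr 1 : ℕ) : ℤ_[p]) : ℤ_[p]) : ℚ_[p])‖ * ((p:ℝ)^(-(k+1)))⁻¹
        ≤ (p:ℝ)^(-1:ℤ) * ((p:ℝ)^(-(k+1)))⁻¹ := by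
          apply mul_le_mul_of_nonneg_right hcoe
          positivity
      _ = (p:ℝ)^k := by
          rw [← zpow_neg, ← zpow_add₀ (ne_of_gt (pR0 p))]
          congr 1; ring
  · rintro ⟨i, hi⟩
    have h1 : ‖(-((i:ℕ):ℚ_[p]) * (p:ℚ_[p])^(-(k+1)))‖ ≤ (p:ℝ)^(k+1) := by
      rw [norm_mul, norm_neg, Padic.norm_p_zpow, neg_neg]
      have : ‖((i:ℕ):ℚ_[p])‖ ≤ 1 := by
        have := Padic.norm_int_le_one (p := p) ((i:ℕ) : ℤ)
        simpa using this
      calc ‖((i:ℕ):ℚ_[p])‖ * (p:ℝ)^(k+1) ≤ 1 * (p:ℝ)^(k+1) :=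
            mul_le_mul_of_nonneg_right this (zpow_nonneg (pR0 p).le _)
        _ = (p:ℝ)^(k+1) := one_mul _
    have hyd : y = (-((i:ℕ):ℚ_[p]) * (p:ℚ_[p])^(-(k+1)) + y)
        + (((i:ℕ):ℚ_[p]) * (p:ℚ_[p])^(-(k+1))) := by ring
    calc ‖y‖ = ‖(-((i:ℕ):ℚ_[p]) * (p:ℚ_[p])^(-(k+1)) + y)
        + (((i:ℕ):ℚ_[p]) * (p:ℚ_[p])^(-(k+1)))‖ := by rw [← hyd]
      _ ≤ max ‖(-((i:ℕ):ℚ_[p]) * (p:ℚ_[p])^(-(k+1)) + y)‖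
            ‖(((i:ℕ):ℚ_[p]) * (p:ℚ_[p])^(-(k+1)))‖ := Padic.nonarchimedean _ _
      _ ≤ (p:ℝ)^(k+1) := by
          apply max_le
          · exact le_trans hi (zpow_le_zpow_right₀ (pR1 p).le (by omega))
          · simpa [norm_mul, norm_neg] using h1

lemma Bset_succ_disj (k : ℤ) : Pairwise (Function.onFun Disjoint
    (fun i : Fin p => (fun y => (-((i:ℕ):ℚ_[p]) * (p:ℚ_[p])^(-(k+1))) + y) ⁻¹' Bset p k)) := by
  intro i j hij
  rw [Function.onFun, Set.disjoint_left]
  intro y hi hj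
  simp only [mem_preimage, Bset, mem_setOf_eq] at hi hj
  have hd : ‖(((i:ℕ):ℚ_[p]) - ((j:ℕ):ℚ_[p])) * (p:ℚ_[p])^(-(k+1))‖ ≤ (p:ℝ)^k := by
    have hrw : (((i:ℕ):ℚ_[p]) - ((j:ℕ):ℚ_[p])) * (p:ℚ_[p])^(-(k+1))
        = (-((j:ℕ):ℚ_[p]) * (p:ℚ_[p])^(-(k+1)) + y)
          + (-((-((i:ℕ):ℚ_[p]) * (p:ℚ_[p])^(-(k+1)) + y))) := by ring
    rw [hrw]
    refine le_trans (Padic.nonarchimedean _ _) (max_le hj (by rwa [norm_neg]))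
  have hnormij : ‖(((i:ℕ):ℚ_[p]) - ((j:ℕ):ℚ_[p]))‖ = 1 := by
    have hcast : (((i:ℕ):ℚ_[p]) - ((j:ℕ):ℚ_[p])) = ((((i:ℕ):ℤ) - ((j:ℕ):ℤ) : ℤ) : ℚ_[p]) := by
      push_cast; ring
    rw [hcast]
    refine le_antisymm (Padic.norm_int_le_one _) ?_
    by_contra hlt
    rw [not_le] at hlt
    have hdvd := Padic.norm_intCast_lt_one_iff.1 hlt
    have hne : ((i:ℕ):ℤ) - ((j:ℕ):ℤ) ≠ 0 := by
      have := Fin.val_injective.ne hij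
      omega
    have hnat : p ∣ (((i:ℕ):ℤ) - ((j:ℕ):ℤ)).natAbs := by
      have := Int.natAbs_dvd_natAbs.mpr hdvd
      simpa using this
    have hlt1 : (((i:ℕ):ℤ) - ((j:ℕ):ℤ)).natAbs < p := by
      have h1 := i.isLt; have h2 := j.isLt; omega
    have := Nat.le_of_dvd (by omega) hnat
    omega
  rw [norm_mul, hnormij, one_mul, Padic.norm_p_zpow, neg_neg] at hd
  exact absurd hd (not_le.2 (zpow_lt_zpow_right₀ (pR1 p) (by omega)))

lemma measure_Bset_succ (k : ℤ) :
    padicHaar p (Bset p (k+1)) = p * padicHaar p (Bset p k) := by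
  rw [Bset_succ p k, measure_iUnion (Bset_succ_disj p k)
    (fun i => (measurableSet_Bset p k).preimage (measurable_const_add _))]
  have heach : ∀ i : Fin p,
      padicHaar p ((fun y => (-((i:ℕ):ℚ_[p]) * (p:ℚ_[p])^(-(k+1))) + y) ⁻¹' Bset p k)
        = padicHaar p (Bset p k) := fun i =>
    measure_preimage_add _ _ _
  rw [tsum_congr heach, tsum_fintype]
  simp [Finset.sum_const, Finset.card_univ, nsmul_eq_mul]

lemma measure_Bset (k : ℤ) : padicHaar p (Bset p k) = ENNReal.ofReal ((p:ℝ)^k) := by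
  have hstep : ∀ j : ℤ, padicHaar p (Bset p (j+1)) = p * padicHaar p (Bset p j) :=
    measure_Bset_succ p
  have hP : ((p:ENNReal)) = ENNReal.ofReal ((p:ℝ)) := by
    rw [ENNReal.ofReal_natCast]
  induction k using Int.induction_on with
  | zero =>
      have h1 : padicHaar p (Metric.closedBall 0 1) = 1 := Measure.addHaarMeasure_self
      rw [Bset_zero_eq, h1]
      simp
  | succ k ih =>
      rw [hstep k, ih, hP, ← ENNReal.ofReal_mul (pR0 p).le]
      congr 1
      rw [zpow_add_one₀ (ne_of_gt (pR0 p))]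
      ring
  | pred k ih =>
      have h := hstep (-(k:ℤ)-1)
      rw [show (-(k:ℤ)-1)+1 = -(k:ℤ) by ring, ih] at h
      have : ENNReal.ofReal ((p:ℝ)^(-(k:ℤ))) = (p:ENNReal) * ENNReal.ofReal ((p:ℝ)^(-(k:ℤ)-1)) := by
        rw [hP, ← ENNReal.ofReal_mul (pR0 p).le]
        congr 1
        rw [show (-(k:ℤ)) = (-(k:ℤ)-1) + 1 by ring, zpow_add_one₀ (ne_of_gt (pR0 p))]
        ring
      rw [this] at h
      exact (ENNReal.mul_right_inj (by simp [(Fact.out : p.Prime).ne_zero])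
        (ENNReal.natCast_ne_top p)).1 h.symm

lemma measure_Bset_ne_top (k : ℤ) : padicHaar p (Bset p k) ≠ ⊤ := by
  rw [measure_Bset]; exact ENNReal.ofReal_ne_top

lemma measure_singleton_zero : padicHaar p {(0:ℚ_[p])} = 0 := by
  have hle : ∀ j : ℕ, padicHaar p {(0:ℚ_[p])} ≤ ENNReal.ofReal ((p:ℝ)^(-(j:ℤ))) := by
    intro j
    rw [← measure_Bset]
    apply measure_mono
    intro y hy
    simp only [mem_singleton_iff] at hy
    subst hy
    simp only [Bset, mem_setOf_eq, norm_zero]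
    exact (zpow_pos (pR0 p) _).le
  have htend : Tendsto (fun j : ℕ => ENNReal.ofReal ((p:ℝ)^(-(j:ℤ)))) atTop (nhds 0) := by
    have h1 : Tendsto (fun j : ℕ => ((p:ℝ)⁻¹)^j) atTop (nhds 0) :=
      tendsto_pow_atTop_nhds_zero_of_lt_one (by positivity) (inv_lt_one_of_one_lt₀ (pR1 p))
    have h2 : (fun j : ℕ => ENNReal.ofReal ((p:ℝ)^(-(j:ℤ))))
        = fun j : ℕ => ENNReal.ofReal (((p:ℝ)⁻¹)^j) := by
      funext j; congr 1; rw [zpow_neg, inv_pow, zpow_natCast]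
    rw [h2, ← ENNReal.ofReal_zero]
    exact (ENNReal.continuous_ofReal.tendsto 0).comp h1
  exact le_antisymm (ge_of_tendsto' htend hle) zero_le

lemma Sset_eq_diff (k : ℤ) : Sset p k = Bset p k \ Bset p (k-1) := by
  ext y
  simp only [Sset, Bset, mem_setOf_eq, mem_diff]
  constructor
  · intro h
    refine ⟨le_of_eq h, ?_⟩
    rw [h]
    exact not_le.2 (zpow_lt_zpow_right₀ (pR1 p) (by omega))
  · rintro ⟨h1, h2⟩
    rcases lt_or_eq_of_le h1 with h | h
    · exact absurd (norm_le_iff_lt p |>.2 h) h2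
    · exact h

/-- The real measure of the sphere of radius `p^k`. -/
noncomputable def mS (k : ℤ) : ℝ := (p:ℝ)^k - (p:ℝ)^(k-1)

lemma mS_nonneg (k : ℤ) : 0 ≤ mS p k :=
  sub_nonneg.2 (zpow_le_zpow_right₀ (pR1 p).le (by omega))

lemma mS_eq (k : ℤ) : mS p k = (p:ℝ)^k * (1 - 1/(p:ℝ)) := by
  rw [mS, zpow_sub_one₀ (ne_of_gt (pR0 p))]
  ring

lemma measure_Sset (k : ℤ) : padicHaar p (Sset p k) = ENNReal.ofReal (mS p k) := by
  have hsub : Bset p (k-1) ⊆ Bset p k := fun y hy =>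
    le_trans hy (zpow_le_zpow_right₀ (pR1 p).le (by omega))
  rw [Sset_eq_diff, measure_diff hsub (measurableSet_Bset p (k-1)).nullMeasurableSet
      (measure_Bset_ne_top p (k-1)),
    measure_Bset, measure_Bset, ← ENNReal.ofReal_sub _ (zpow_nonneg (pR0 p).le _)]
  rfl

lemma measure_Sset_ne_top (k : ℤ) : padicHaar p (Sset p k) ≠ ⊤ := by
  rw [measure_Sset]; exact ENNReal.ofReal_ne_top

lemma measure_Sset_toReal (k : ℤ) : (padicHaar p (Sset p k)).toReal = mS p k := by
  rw [measure_Sset]; exact ENNReal.toReal_ofReal (mS_nonneg p k)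

lemma Sset_pairwise_disjoint {g : ℕ → ℤ} (hg : Function.Injective g) :
    Pairwise (Function.onFun Disjoint (fun j => Sset p (g j))) := by
  intro i j hij
  rw [Function.onFun, Set.disjoint_left]
  intro y hi hj
  simp only [Sset, mem_setOf_eq] at hi hj
  have hmono : StrictMono (fun k : ℤ => (p:ℝ)^k) := fun a b hab => zpow_lt_zpow_right₀ (pR1 p) hab
  exact hij (hg (hmono.injective (hi.symm.trans hj)))

lemma integrableOn_of_eqOn {f : ℚ_[p] → ℝ} {s : Set ℚ_[p]} {c : ℝ} (hs : MeasurableSet s)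
    (hμ : padicHaar p s ≠ ⊤) (hf : ∀ y ∈ s, f y = c) :
    MeasureTheory.IntegrableOn f s (padicHaar p) := by
  have h0 : MeasureTheory.IntegrableOn (fun _ => c) s (padicHaar p) :=
    MeasureTheory.integrableOn_const hμ
  exact h0.congr_fun (fun y hy => (hf y hy).symm) hs

lemma setIntegral_of_eqOn {f : ℚ_[p] → ℝ} {s : Set ℚ_[p]} {c : ℝ} (hs : MeasurableSet s)
    (hf : ∀ y ∈ s, f y = c) :
    ∫ y in s, f y ∂(padicHaar p) = c * (padicHaar p s).toReal := by
  rw [MeasureTheory.setIntegral_congr_fun hs hf, MeasureTheory.setIntegral_const, smul_eq_mul,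
    mul_comm, measureReal_def]

lemma summable_shift_down (a : ℤ → ℝ) {m : ℤ}
    (h : Summable fun j : ℕ => a (m - j)) (n : ℤ) :
    Summable fun j : ℕ => a (n - j) := by
  rcases le_total n m with hnm | hmn
  · have h2 := (summable_nat_add_iff (f := fun j : ℕ => a (m - j)) (m - n).toNat).2 h
    refine h2.congr fun j => ?_
    congr 1
    push_cast
    omega
  · refine (summable_nat_add_iff (n - m).toNat).1 (h.congr fun j => ?_)
    congr 1
    push_cast
    omega

lemma summable_shift_up (a : ℤ → ℝ) {m : ℤ}
    (h : Summable fun j : ℕ => a (m + j)) (n : ℤ) :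
    Summable fun j : ℕ => a (n + j) := by
  rcases le_total m n with hmn | hnm
  · have h2 := (summable_nat_add_iff (f := fun j : ℕ => a (m + j)) (n - m).toNat).2 h
    refine h2.congr fun j => ?_
    congr 1
    push_cast
    omega
  · refine (summable_nat_add_iff (m - n).toNat).1 (h.congr fun j => ?_)
    congr 1
    push_cast
    omega

lemma radial_measurable {u : ℚ_[p] → ℝ} (hu : Radial p u) : Measurable u := by
  classical
  have hval : Measurable (fun y : ℚ_[p] => y.valuation) := by
    apply measurable_to_countable'
    intro k
    have hset : (fun y : ℚ_[p] => y.valuation) ⁻¹' {k}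
        = Sset p (-k) ∪ (if k = 0 then {(0:ℚ_[p])} else ∅) := by
      ext y
      rcases eq_or_ne y 0 with rfl | hy
      · simp only [mem_preimage, mem_singleton_iff, Padic.valuation_zero, mem_union,
          Sset, mem_setOf_eq, norm_zero]
        constructor
        · intro h; subst h; simp
        · rintro (h | h)
          · exact absurd h.symm (ne_of_gt (zpow_pos (pR0 p) _))
          · split at h
            · omega
            · simp at h
      · simp only [mem_preimage, mem_singleton_iff, mem_union, Sset, mem_setOf_eq]
        have hnorm : ‖y‖ = (p:ℝ)^(-y.valuation) := Padic.norm_eq_zpow_neg_valuation hy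
        constructor
        · intro h; left; rw [hnorm, h]
        · rintro (h | h)
          · rw [hnorm] at h
            have := zpow_right_injective₀ (pR0 p) (ne_of_gt (pR1 p)) h
            omega
          · split at h
            · simp only [mem_singleton_iff] at h; exact absurd h hy
            · simp at h
    rw [hset]
    refine (measurableSet_Sset p (-k)).union ?_
    split <;> simp
  have hu_eq : u = fun y => if y = 0 then u 0 else u (sph p (-y.valuation)) := by
    funext y
    split
    · next h => rw [h]
    · next h =>
        exact hu y _ (by rw [norm_sph, Padic.norm_eq_zpow_neg_valuation h])
  rw [hu_eq]
  refine Measurable.ite (measurableSet_eq) measurable_const ?_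
  exact (measurable_of_countable (fun k : ℤ => u (sph p (-k)))).comp hval

lemma rpow_zpow_mul (e : ℝ) (k : ℤ) : ((p:ℝ)^k) ^ e = (p:ℝ) ^ ((k:ℝ) * e) := by
  rw [← Real.rpow_intCast (p:ℝ) k, ← Real.rpow_mul (pR0 p).le]

lemma hpow_mS (α : ℝ) (k : ℤ) :
    ((p:ℝ)^k)^(-α-1) * mS p k = (1 - 1/(p:ℝ)) * (p:ℝ)^(-α*(k:ℝ)) := by
  rw [mS_eq, rpow_zpow_mul,
    show ((p:ℝ)^k : ℝ) = (p:ℝ)^((k:ℤ):ℝ) from (Real.rpow_intCast _ _).symm,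
    ← mul_assoc, ← Real.rpow_add (pR0 p),
    show ((k:ℤ):ℝ)*(-α-1) + ((k:ℤ):ℝ) = -α*((k:ℤ):ℝ) by ring]
  ring

lemma key_integral (α : ℝ) (hα : 0 < α)
    (u : ℚ_[p] → ℝ) (hu : Radial p u) (m : ℤ)
    (h1 : Summable fun j : ℕ => (p : ℝ) ^ (m - j : ℤ) * |u (sph p (m - j))|)
    (h2 : Summable fun j : ℕ => (p : ℝ) ^ (-α * ((m + j : ℤ) : ℝ)) * |u (sph p (m + j))|)
    (n : ℤ) (x : ℚ_[p]) (hx : ‖x‖ = (p : ℝ) ^ n) :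
    MeasureTheory.Integrable (Dker p α u x) (padicHaar p) ∧
    ∫ y, Dker p α u x y ∂(padicHaar p) =
      (1 - 1/(p:ℝ)) * (p:ℝ)^(-(α+1)*(n:ℝ)) *
        (∑' j : ℕ, (p : ℝ) ^ (n - 1 - j : ℤ) * u (sph p (n - 1 - j)))
      - (p:ℝ)^(-α*(n:ℝ)) / p * u (sph p n)
      + (1 - 1/(p:ℝ)) *
        ((∑' j : ℕ, (p : ℝ) ^ (-α * (((n + 1 + j : ℤ)) : ℝ)) * u (sph p (n + 1 + j)))
          - u (sph p n) * ((p:ℝ)^(-α*((n:ℝ)+1)) / (1 - (p:ℝ)^(-α)))) := by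
  have hp0 := pR0 p
  have hp1 := pR1 p
  have hux : u x = u (sph p n) := hu x _ (by rw [hx, norm_sph])
  have hlow : ∀ y ∈ Bset p (n-1), Dker p α u x y = 0 := by
    intro y hy
    have hlt : ‖y‖ < ‖x‖ := by rw [hx]; exact (norm_le_iff_lt p).1 hy
    have heq : ‖x - y‖ = ‖x‖ := norm_sub_eq_left p hlt
    show ‖y‖ ^ (-α - 1) * (u (x - y) - u x) = 0
    rw [hu (x - y) x heq]
    simp
  have hSconst : ∀ k : ℤ, ∀ y ∈ Sset p k, u y = u (sph p k) := fun k y hy =>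
    hu y _ (by rw [norm_sph]; exact hy)
  have hSint : ∀ k : ℤ, IntegrableOn u (Sset p k) (padicHaar p) := fun k =>
    integrableOn_of_eqOn p (measurableSet_Sset p k) (measure_Sset_ne_top p k) (hSconst k)
  have hSval : ∀ k : ℤ, ∫ y in Sset p k, u y ∂(padicHaar p) = u (sph p k) * mS p k := fun k => by
    rw [setIntegral_of_eqOn p (measurableSet_Sset p k) (hSconst k), measure_Sset_toReal]
  have hSnorm : ∀ k : ℤ, ∫ y in Sset p k, ‖u y‖ ∂(padicHaar p) = |u (sph p k)| * mS p k :=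
    fun k => by
      rw [setIntegral_of_eqOn p (measurableSet_Sset p k)
        (fun y hy => by rw [Real.norm_eq_abs, hSconst k y hy]), measure_Sset_toReal]
  have hsum_low : Summable fun j : ℕ => |u (sph p (n - j))| * mS p (n - j) := by
    have hs := summable_shift_down (fun k => (p:ℝ)^k * |u (sph p k)|) h1 n
    exact (hs.mul_left (1 - 1/(p:ℝ))).congr fun j => by rw [mS_eq]; ring
  have hcovB : (⋃ j : ℕ, Sset p (n - j)) = Bset p n \ {0} := by
    ext y
    simp only [mem_iUnion, mem_diff, mem_singleton_iff, Sset, Bset, mem_setOf_eq]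
    constructor
    · rintro ⟨j, hj⟩
      constructor
      · rw [hj]; exact zpow_le_zpow_right₀ hp1.le (by omega)
      · intro h0; rw [h0, norm_zero] at hj; exact absurd hj.symm (ne_of_gt (zpow_pos hp0 _))
    · rintro ⟨hb, h0⟩
      obtain ⟨k, hk⟩ := exists_norm_zpow p h0
      have hkn : k ≤ n := by
        by_contra hc
        rw [hk] at hb
        exact absurd hb (not_le.2 (zpow_lt_zpow_right₀ hp1 (by omega)))
      exact ⟨(n - k).toNat, by rw [hk]; congr 1; omega⟩
  have hdisj_low : Pairwise (Function.onFun Disjoint fun j : ℕ => Sset p (n - j)) :=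
    Sset_pairwise_disjoint p (g := fun j : ℕ => n - j) (fun a b hab => by simpa using hab)
  have hintBU : IntegrableOn u (⋃ j : ℕ, Sset p (n - j)) (padicHaar p) :=
    integrableOn_iUnion_of_summable_integral_norm
      (fun j => hSint _) (by simpa only [hSnorm] using hsum_low)
  have hint0 : IntegrableOn u {(0:ℚ_[p])} (padicHaar p) := by
    unfold IntegrableOn
    rw [Measure.restrict_eq_zero.2 (measure_singleton_zero p)]
    exact integrable_zero_measure
  have hBeq : Bset p n = (⋃ j : ℕ, Sset p (n - j)) ∪ {(0:ℚ_[p])} := by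
    rw [hcovB, diff_union_self,
      union_eq_self_of_subset_right (by
        intro y hy
        simp only [mem_singleton_iff] at hy
        subst hy
        simp only [Bset, mem_setOf_eq, norm_zero]
        exact (zpow_pos hp0 _).le)]
  have hintB : IntegrableOn u (Bset p n) (padicHaar p) := by
    rw [hBeq]; exact hintBU.union hint0
  have hae0 : ((⋃ j : ℕ, Sset p (n - j)) : Set ℚ_[p]) =ᵐ[padicHaar p] Bset p n := by
    rw [hcovB]
    exact diff_ae_eq_self.2 (measure_mono_null inter_subset_right (measure_singleton_zero p))
  have hHasSumB : HasSum (fun j : ℕ => u (sph p (n - j)) * mS p (n - j))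
      (∫ y in Bset p n, u y ∂(padicHaar p)) := by
    have h := hasSum_integral_iUnion (μ := padicHaar p) (f := u)
      (fun j => measurableSet_Sset p _) hdisj_low hintBU
    rw [setIntegral_congr_set hae0] at h
    simpa only [hSval] using h
  have hmp : MeasurePreserving (fun z : ℚ_[p] => x - z) (padicHaar p) (padicHaar p) :=
    Measure.measurePreserving_sub_left (padicHaar p) x
  have hemb : MeasurableEmbedding (fun z : ℚ_[p] => x - z) :=
    (MeasurableEquiv.subLeft x).measurableEmbedding
  have hTm : MeasurableSet {z : ℚ_[p] | ‖x - z‖ = (p:ℝ)^n} :=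
    measurableSet_eq_fun ((measurable_const.sub measurable_id).norm) measurable_const
  have hpre : (fun z : ℚ_[p] => x - z) ⁻¹' {z : ℚ_[p] | ‖x - z‖ = (p:ℝ)^n} = Sset p n := by
    ext z; simp [Sset, sub_sub_cancel]
  have hDm : MeasurableSet {z : ℚ_[p] | ‖x - z‖ ≤ (p:ℝ)^(n-1)} :=
    measurableSet_le ((measurable_const.sub measurable_id).norm) measurable_const
  have hzy : ∀ z : ℚ_[p], ‖z‖ ≤ max ‖x‖ ‖x - z‖ := by
    intro z
    calc ‖z‖ = ‖x + -(x - z)‖ := by rw [show x + -(x - z) = z by ring]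
      _ ≤ max ‖x‖ ‖-(x-z)‖ := Padic.nonarchimedean _ _
      _ = max ‖x‖ ‖x - z‖ := by rw [norm_neg]
  have hDsub : {z : ℚ_[p] | ‖x - z‖ ≤ (p:ℝ)^(n-1)} ⊆ Bset p n := by
    intro z hz
    simp only [mem_setOf_eq] at hz
    simp only [Bset, mem_setOf_eq]
    exact le_trans (hzy z) (max_le (le_of_eq hx)
      (le_trans hz (zpow_le_zpow_right₀ hp1.le (by omega))))
  have hTd : {z : ℚ_[p] | ‖x - z‖ = (p:ℝ)^n}
      = Bset p n \ {z : ℚ_[p] | ‖x - z‖ ≤ (p:ℝ)^(n-1)} := by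
    ext z
    simp only [Bset, mem_setOf_eq, mem_diff, not_le]
    constructor
    · intro h
      refine ⟨le_trans (hzy z) (max_le (le_of_eq hx) (le_of_eq h)), ?_⟩
      rw [h]; exact zpow_lt_zpow_right₀ hp1 (by omega)
    · rintro ⟨hz1, hz2⟩
      have hle : ‖x - z‖ ≤ (p:ℝ)^n := by
        refine le_trans ?_ (max_le (le_of_eq hx) hz1)
        calc ‖x - z‖ = ‖x + -z‖ := by rw [sub_eq_add_neg]
          _ ≤ max ‖x‖ ‖-z‖ := Padic.nonarchimedean _ _
          _ = max ‖x‖ ‖z‖ := by rw [norm_neg]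
      rcases lt_or_eq_of_le hle with hlt | heq
      · exact absurd ((norm_le_iff_lt p).2 hlt) (not_le.2 hz2)
      · exact heq
  have hSnint : IntegrableOn (fun y => u (x - y)) (Sset p n) (padicHaar p) := by
    have hTint : IntegrableOn u {z : ℚ_[p] | ‖x - z‖ = (p:ℝ)^n} (padicHaar p) := by
      rw [hTd]; exact hintB.mono_set diff_subset
    have h := (hmp.integrableOn_comp_preimage hemb).2 hTint
    rwa [hpre] at h
  have hmuD : (padicHaar p {z : ℚ_[p] | ‖x - z‖ ≤ (p:ℝ)^(n-1)}).toReal = (p:ℝ)^(n-1) := by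
    have hDpre : {z : ℚ_[p] | ‖x - z‖ ≤ (p:ℝ)^(n-1)}
        = (fun z : ℚ_[p] => x - z) ⁻¹' Bset p (n-1) := by
      ext z; simp [Bset]
    rw [hDpre, hmp.measure_preimage (measurableSet_Bset p (n-1)).nullMeasurableSet, measure_Bset]
    exact ENNReal.toReal_ofReal (zpow_nonneg hp0.le _)
  have hDconst : ∀ z ∈ {z : ℚ_[p] | ‖x - z‖ ≤ (p:ℝ)^(n-1)}, u z = u (sph p n) := by
    intro z hz
    simp only [mem_setOf_eq] at hz
    have hlt : ‖x - z‖ < ‖x‖ := by rw [hx]; exact (norm_le_iff_lt p).1 hz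
    have h4 : ‖x - (x - z)‖ = ‖x‖ := norm_sub_eq_left p hlt
    rw [sub_sub_cancel] at h4
    exact hu z (sph p n) (by rw [norm_sph, ← hx, h4])
  have hSnval : ∫ y in Sset p n, u (x - y) ∂(padicHaar p)
      = (∫ y in Bset p n, u y ∂(padicHaar p)) - u (sph p n) * (p:ℝ)^(n-1) := by
    have hstep : ∫ y in Sset p n, u (x - y) ∂(padicHaar p)
        = ∫ z in {z : ℚ_[p] | ‖x - z‖ = (p:ℝ)^n}, u z ∂(padicHaar p) := by
      rw [← hpre]
      exact hmp.setIntegral_preimage_emb hemb u _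
    rw [hstep, hTd, integral_diff hDm hintB hDsub]
    congr 1
    rw [setIntegral_of_eqOn p hDm hDconst, hmuD]
  have hSnfconst : ∀ y ∈ Sset p n,
      Dker p α u x y = ((p:ℝ)^(n:ℤ))^(-α-1) * (u (x - y) - u (sph p n)) := by
    intro y hy
    show ‖y‖ ^ (-α - 1) * (u (x - y) - u x) = _
    rw [show (‖y‖:ℝ) = (p:ℝ)^(n:ℤ) from hy, hux]
  have hSnfint : IntegrableOn (Dker p α u x) (Sset p n) (padicHaar p) := by
    have hg : IntegrableOn (fun y => ((p:ℝ)^(n:ℤ))^(-α-1) * (u (x - y) - u (sph p n)))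
        (Sset p n) (padicHaar p) :=
      (hSnint.sub (integrableOn_const (measure_Sset_ne_top p n))).const_mul _
    exact hg.congr_fun (fun y hy => (hSnfconst y hy).symm) (measurableSet_Sset p n)
  have hSnfval : ∫ y in Sset p n, Dker p α u x y ∂(padicHaar p)
      = ((p:ℝ)^(n:ℤ))^(-α-1) * ((∫ y in Bset p n, u y ∂(padicHaar p))
          - u (sph p n) * (p:ℝ)^(n-1) - u (sph p n) * mS p n) := by
    rw [setIntegral_congr_fun (measurableSet_Sset p n) hSnfconst, integral_const_mul,
      integral_sub hSnint (integrableOn_const (measure_Sset_ne_top p n)),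
      setIntegral_const, smul_eq_mul, measureReal_def, measure_Sset_toReal, hSnval]
    ring
  have hhigh_norm : ∀ j : ℕ, ∀ y ∈ Sset p (n+1+j), ‖x - y‖ = (p:ℝ)^((n:ℤ)+1+j) := by
    intro j y hy
    have hy' : ‖y‖ = (p:ℝ)^((n:ℤ)+1+j) := hy
    have h5 : ‖x‖ < ‖y‖ := by
      rw [hx, hy']; exact zpow_lt_zpow_right₀ hp1 (by omega)
    rw [norm_sub_rev, norm_sub_eq_left p h5]
    exact hy'
  have hCdef : ∀ j : ℕ, ∀ y ∈ Sset p (n+1+j),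
      Dker p α u x y = ((p:ℝ)^((n:ℤ)+1+j))^(-α-1) * (u (sph p (n+1+j)) - u (sph p n)) := by
    intro j y hy
    show ‖y‖ ^ (-α - 1) * (u (x - y) - u x) = _
    rw [show (‖y‖:ℝ) = (p:ℝ)^((n:ℤ)+1+j) from hy, hux,
      hu (x - y) (sph p (n+1+j)) (by rw [norm_sph, hhigh_norm j y hy])]
  have hhigh_int : ∀ j : ℕ, IntegrableOn (Dker p α u x) (Sset p (n+1+j)) (padicHaar p) :=
    fun j => integrableOn_of_eqOn p (measurableSet_Sset p _) (measure_Sset_ne_top p _) (hCdef j)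
  have hhigh_val : ∀ j : ℕ, ∫ y in Sset p (n+1+j), Dker p α u x y ∂(padicHaar p)
      = (1 - 1/(p:ℝ)) * ((p:ℝ)^(-α*(((n+1+j : ℤ)):ℝ)) * u (sph p (n+1+j)))
        - (1 - 1/(p:ℝ)) * ((p:ℝ)^(-α*(((n+1+j : ℤ)):ℝ)) * u (sph p n)) := by
    intro j
    rw [setIntegral_of_eqOn p (measurableSet_Sset p _) (hCdef j), measure_Sset_toReal,
      show ((p:ℝ)^((n:ℤ)+1+j))^(-α-1) * (u (sph p (n+1+j)) - u (sph p n)) * mS p (n+1+j)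
        = (((p:ℝ)^((n:ℤ)+1+j))^(-α-1) * mS p (n+1+j)) * (u (sph p (n+1+j)) - u (sph p n))
        from by ring,
      hpow_mS p α]
    ring
  have hr0 : (0:ℝ) ≤ (p:ℝ)^(-α) := Real.rpow_nonneg hp0.le _
  have hr1 : (p:ℝ)^(-α) < 1 := Real.rpow_lt_one_of_one_lt_of_neg hp1 (by linarith)
  have hgeom_term : ∀ j : ℕ,
      (p:ℝ)^(-α*(((n+1+j : ℤ)):ℝ)) = (p:ℝ)^(-α*((n:ℝ)+1)) * ((p:ℝ)^(-α))^j := by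
    intro j
    rw [← Real.rpow_natCast ((p:ℝ)^(-α)) j, ← Real.rpow_mul hp0.le, ← Real.rpow_add hp0]
    congr 1
    push_cast
    ring
  have hgeomHasSum : HasSum (fun j : ℕ => (p:ℝ)^(-α*(((n+1+j : ℤ)):ℝ)))
      ((p:ℝ)^(-α*((n:ℝ)+1)) / (1 - (p:ℝ)^(-α))) := by
    rw [div_eq_mul_inv]
    have h := (hasSum_geometric_of_lt_one hr0 hr1).mul_left ((p:ℝ)^(-α*((n:ℝ)+1)))
    simpa only [← hgeom_term] using h
  have hs_high := summable_shift_up (fun k : ℤ => (p:ℝ)^(-α*(k:ℝ)) * |u (sph p k)|) h2 (n+1)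
  have hsum_high_u : Summable
      (fun j : ℕ => (p:ℝ)^(-α*(((n+1+j : ℤ)):ℝ)) * u (sph p (n+1+j))) := by
    refine Summable.of_abs (hs_high.congr fun j => ?_)
    rw [abs_mul, abs_of_nonneg (Real.rpow_nonneg hp0.le _)]
  have hsum_norm_high : Summable
      (fun j : ℕ => ∫ y in Sset p (n+1+j), ‖Dker p α u x y‖ ∂(padicHaar p)) := by
    have hnval : ∀ j : ℕ, ∫ y in Sset p (n+1+j), ‖Dker p α u x y‖ ∂(padicHaar p)
        = (1 - 1/(p:ℝ)) * ((p:ℝ)^(-α*(((n+1+j:ℤ)):ℝ)) * |u (sph p (n+1+j)) - u (sph p n)|) := by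
      intro j
      rw [setIntegral_of_eqOn p (measurableSet_Sset p _)
          (fun y hy => by
            rw [Real.norm_eq_abs, hCdef j y hy, abs_mul,
              abs_of_nonneg (Real.rpow_nonneg (zpow_nonneg hp0.le _) _)]),
        measure_Sset_toReal,
        show ((p:ℝ)^((n:ℤ)+1+j))^(-α-1) * |u (sph p (n+1+j)) - u (sph p n)| * mS p (n+1+j)
          = (((p:ℝ)^((n:ℤ)+1+j))^(-α-1) * mS p (n+1+j)) * |u (sph p (n+1+j)) - u (sph p n)|
          from by ring,
        hpow_mS p α]
      ring
    have hb : Summable (fun j : ℕ =>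
        (1 - 1/(p:ℝ)) * ((p:ℝ)^(-α*(((n+1+j:ℤ)):ℝ)) * |u (sph p (n+1+j)) - u (sph p n)|)) := by
      refine Summable.mul_left _ ?_
      refine Summable.of_nonneg_of_le (fun j => by positivity) (fun j => ?_)
        (hs_high.add (hgeomHasSum.summable.mul_right |u (sph p n)|))
      calc (p:ℝ)^(-α*(((n+1+j:ℤ)):ℝ)) * |u (sph p (n+1+j)) - u (sph p n)|
          ≤ (p:ℝ)^(-α*(((n+1+j:ℤ)):ℝ)) * (|u (sph p (n+1+j))| + |u (sph p n)|) :=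
            mul_le_mul_of_nonneg_left (abs_sub _ _) (Real.rpow_nonneg hp0.le _)
        _ = (p:ℝ)^(-α*(((n+1+j:ℤ)):ℝ)) * |u (sph p (n+1+j))|
            + (p:ℝ)^(-α*(((n+1+j:ℤ)):ℝ)) * |u (sph p n)| := by ring
    exact hb.congr fun j => (hnval j).symm
  have hintU : IntegrableOn (Dker p α u x) (⋃ j : ℕ, Sset p (n+1+j)) (padicHaar p) :=
    integrableOn_iUnion_of_summable_integral_norm
      (fun j => hhigh_int j) hsum_norm_high
  have hdisj_high : Pairwise (Function.onFun Disjoint fun j : ℕ => Sset p (n+1+j)) :=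
    Sset_pairwise_disjoint p (g := fun j : ℕ => n+1+j) (fun a b hab => by simpa using hab)
  have hHasSumU := hasSum_integral_iUnion (μ := padicHaar p) (f := Dker p α u x)
    (fun j => measurableSet_Sset p _) hdisj_high hintU
  have hUval : ∫ y in (⋃ j : ℕ, Sset p (n+1+j)), Dker p α u x y ∂(padicHaar p)
      = (1 - 1/(p:ℝ)) * ((∑' j : ℕ, (p:ℝ)^(-α*(((n+1+j:ℤ)):ℝ)) * u (sph p (n+1+j)))
          - u (sph p n) * ((p:ℝ)^(-α*((n:ℝ)+1)) / (1 - (p:ℝ)^(-α)))) := by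
    have hA := hsum_high_u.hasSum.mul_left (1 - 1/(p:ℝ))
    have hB := (hgeomHasSum.mul_right (u (sph p n))).mul_left (1 - 1/(p:ℝ))
    have hAB := hA.sub hB
    have h := hHasSumU
    simp only [hhigh_val] at h
    have hv := h.unique hAB
    rw [hv]
    ring
  have hUeq : (⋃ j : ℕ, Sset p (n+1+j)) = {y : ℚ_[p] | (p:ℝ)^n < ‖y‖} := by
    ext y
    simp only [mem_iUnion, Sset, mem_setOf_eq]
    constructor
    · rintro ⟨j, hj⟩
      rw [hj]; exact zpow_lt_zpow_right₀ hp1 (by omega)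
    · intro hlt
      have hy0 : y ≠ 0 := by
        intro h0
        rw [h0, norm_zero] at hlt
        exact absurd hlt (not_lt.2 (zpow_pos hp0 _).le)
      obtain ⟨k, hk⟩ := exists_norm_zpow p hy0
      rw [hk] at hlt
      have hkn : n < k := by
        by_contra hc
        exact absurd hlt (not_lt.2 (zpow_le_zpow_right₀ hp1.le (not_lt.1 hc)))
      exact ⟨(k - n - 1).toNat, by rw [hk]; congr 1; omega⟩
  have hcover : (univ : Set ℚ_[p]) = (Bset p (n-1) ∪ Sset p n) ∪ (⋃ j : ℕ, Sset p (n+1+j)) := by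
    rw [hUeq]
    ext y
    simp only [mem_univ, true_iff, mem_union, Bset, Sset, mem_setOf_eq]
    rcases le_or_gt ‖y‖ ((p:ℝ)^n) with h | h
    · rcases eq_or_lt_of_le h with he | hlt
      · exact Or.inl (Or.inr he)
      · exact Or.inl (Or.inl ((norm_le_iff_lt p).2 hlt))
    · exact Or.inr h
  have hlowint : IntegrableOn (Dker p α u x) (Bset p (n-1)) (padicHaar p) :=
    integrableOn_of_eqOn p (measurableSet_Bset p _) (measure_Bset_ne_top p _) hlow
  have hmeasU : MeasurableSet (⋃ j : ℕ, Sset p (n+1+j)) :=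
    MeasurableSet.iUnion (fun j => measurableSet_Sset p _)
  have hdisj1 : Disjoint (Bset p (n-1)) (Sset p n) := by
    rw [Set.disjoint_left]
    intro y hy1 hy2
    simp only [Bset, mem_setOf_eq] at hy1
    simp only [Sset, mem_setOf_eq] at hy2
    rw [hy2] at hy1
    exact absurd hy1 (not_le.2 (zpow_lt_zpow_right₀ hp1 (by omega)))
  have hdisj2 : Disjoint (Bset p (n-1) ∪ Sset p n) (⋃ j : ℕ, Sset p (n+1+j)) := by
    rw [hUeq, Set.disjoint_left]
    rintro y (hy | hy) hmem
    · simp only [Bset, mem_setOf_eq] at hy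
      simp only [mem_setOf_eq] at hmem
      exact absurd (lt_of_lt_of_le hmem (le_trans hy
        (zpow_le_zpow_right₀ hp1.le (by omega)))) (lt_irrefl _)
    · simp only [Sset, mem_setOf_eq] at hy
      simp only [mem_setOf_eq] at hmem
      rw [hy] at hmem
      exact absurd hmem (lt_irrefl _)
  have hIntegrable : MeasureTheory.Integrable (Dker p α u x) (padicHaar p) := by
    rw [← integrableOn_univ, hcover]
    exact (hlowint.union hSnfint).union hintU
  refine ⟨hIntegrable, ?_⟩
  have hTotal : ∫ y, Dker p α u x y ∂(padicHaar p)
      = (∫ y in Sset p n, Dker p α u x y ∂(padicHaar p))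
        + ∫ y in (⋃ j : ℕ, Sset p (n+1+j)), Dker p α u x y ∂(padicHaar p) := by
    rw [← setIntegral_univ, hcover,
      setIntegral_union hdisj2 hmeasU (hlowint.union hSnfint) hintU,
      setIntegral_union hdisj1 (measurableSet_Sset p n) hlowint hSnfint,
      setIntegral_of_eqOn p (measurableSet_Bset p _) hlow, zero_mul, zero_add]
  have hBn_val : ∫ y in Bset p n, u y ∂(padicHaar p)
      = u (sph p n) * mS p n
        + (1 - 1/(p:ℝ)) * (∑' j : ℕ, (p:ℝ)^(n-1-j:ℤ) * u (sph p (n-1-j))) := by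
    rw [← hHasSumB.tsum_eq, Summable.tsum_eq_zero_add hHasSumB.summable]
    congr 1
    · norm_num
    · rw [← tsum_mul_left]
      refine tsum_congr fun j => ?_
      rw [show (n : ℤ) - (↑(j+1):ℤ) = n - 1 - ↑j from by push_cast; ring, mS_eq]
      ring
  rw [hTotal, hSnfval, hUval, hBn_val]
  have hKPn : ((p:ℝ)^(n:ℤ))^(-α-1) * (p:ℝ)^(n:ℤ) = (p:ℝ)^(-α*(n:ℝ)) := by
    rw [rpow_zpow_mul,
      show ((p:ℝ)^(n:ℤ) : ℝ) = (p:ℝ)^((n:ℤ):ℝ) from (Real.rpow_intCast _ _).symm,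
      ← Real.rpow_add hp0]
    congr 1
    ring
  have hK : ((p:ℝ)^(n:ℤ))^(-α-1) = (p:ℝ)^(-(α+1)*(n:ℝ)) := by
    rw [rpow_zpow_mul]; congr 1; ring
  rw [zpow_sub_one₀ (ne_of_gt hp0) n]
  linear_combination
    ((1 - 1/(p:ℝ)) * (∑' j : ℕ, (p:ℝ)^(n-1-j:ℤ) * u (sph p (n-1-j)))) * hK
    - (u (sph p n) * ((p:ℝ))⁻¹) * hKPn

end VladAux

/-- explicit formula for the Vladimirov derivative of a radial function. -/
theorem vladimirov_radial_formula (p : ℕ) [Fact p.Prime] (α : ℝ) (hα : 0 < α)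
    (u : ℚ_[p] → ℝ) (hu : Radial p u) (m : ℤ)
    (h1 : Summable fun j : ℕ => (p : ℝ) ^ (m - j : ℤ) * |u (sph p (m - j))|)
    (h2 : Summable fun j : ℕ => (p : ℝ) ^ (-α * ((m + j : ℤ) : ℝ)) * |u (sph p (m + j))|)
    (n : ℤ) (x : ℚ_[p]) (hx : ‖x‖ = (p : ℝ) ^ n) :
    Integrable (Dker p α u x) (padicHaar p) ∧
    (∀ x' : ℚ_[p], ‖x'‖ = ‖x‖ → Dop p α u x' = Dop p α u x) ∧
    Dop p α u x =
      ((1 - (p : ℝ) ^ α) / (1 - (p : ℝ) ^ (-α - 1))) * (1 - 1 / (p : ℝ)) *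
          (p : ℝ) ^ (-(α + 1) * (n : ℝ)) *
          (∑' j : ℕ, (p : ℝ) ^ (n - 1 - j : ℤ) * u (sph p (n - 1 - j))) +
        (p : ℝ) ^ (-α * (n : ℝ) - 1) *
          (((p : ℝ) ^ α + (p : ℝ) - 2) / (1 - (p : ℝ) ^ (-α - 1))) * u (sph p n) +
        ((1 - (p : ℝ) ^ α) / (1 - (p : ℝ) ^ (-α - 1))) * (1 - 1 / (p : ℝ)) *
          (∑' j : ℕ, (p : ℝ) ^ (-α * (((n + 1 + j : ℤ)) : ℝ)) * u (sph p (n + 1 + j))) := by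
  obtain ⟨hint, hval⟩ := key_integral p α hα u hu m h1 h2 n x hx
  have hradial : ∀ x' : ℚ_[p], ‖x'‖ = ‖x‖ → Dop p α u x' = Dop p α u x := by
    intro x' hx'
    have h' := (key_integral p α hα u hu m h1 h2 n x' (by rw [hx', hx])).2
    show ((1 - (p : ℝ) ^ α) / (1 - (p : ℝ) ^ (-α - 1)))
        * (∫ y, Dker p α u x' y ∂(padicHaar p))
      = ((1 - (p : ℝ) ^ α) / (1 - (p : ℝ) ^ (-α - 1)))
        * (∫ y, Dker p α u x y ∂(padicHaar p))
    rw [h', hval]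
  refine ⟨hint, hradial, ?_⟩
  show ((1 - (p : ℝ) ^ α) / (1 - (p : ℝ) ^ (-α - 1)))
      * (∫ y, Dker p α u x y ∂(padicHaar p)) = _
  rw [hval]
  have hP0 : (0:ℝ) < p := pR0 p
  have hP1 : (1:ℝ) < p := pR1 p
  have hX1 : 1 < (p:ℝ) ^ α := (Real.one_lt_rpow_iff_of_pos hP0).2 (Or.inl ⟨hP1, hα⟩)
  have hX0 : (0:ℝ) < (p:ℝ) ^ α := lt_trans one_pos hX1
  have e1 : (p:ℝ) ^ (-α*(n:ℝ) - 1) = (p:ℝ) ^ (-α*(n:ℝ)) * ((p:ℝ))⁻¹ := by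
    rw [show -α*(n:ℝ) - 1 = -α*(n:ℝ) + (-1) by ring, Real.rpow_add hP0, Real.rpow_neg_one]
  have e2 : (p:ℝ) ^ (-α) = ((p:ℝ) ^ α)⁻¹ := by
    rw [Real.rpow_neg hP0.le]
  have e3 : (p:ℝ) ^ (-α*((n:ℝ)+1)) = (p:ℝ) ^ (-α*(n:ℝ)) * ((p:ℝ) ^ α)⁻¹ := by
    rw [show -α*((n:ℝ)+1) = -α*(n:ℝ) + (-α) by ring, Real.rpow_add hP0, e2]
  have e4 : (p:ℝ) ^ (-α - 1) = ((p:ℝ) ^ α)⁻¹ * ((p:ℝ))⁻¹ := by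
    rw [show -α - 1 = (-α) + (-1) by ring, Real.rpow_add hP0, e2, Real.rpow_neg_one]
  rw [e4, e3, e1, e2]
  have hXne : ((p:ℝ) ^ α) ≠ 0 := ne_of_gt hX0
  have hPne : ((p:ℝ)) ≠ 0 := ne_of_gt hP0
  have hd1 : 1 - ((p:ℝ) ^ α)⁻¹ ≠ 0 :=
    sub_ne_zero.2 (ne_of_gt (inv_lt_one_of_one_lt₀ hX1))
  have hd2 : 1 - ((p:ℝ) ^ α)⁻¹ * ((p:ℝ))⁻¹ ≠ 0 := by
    have a1 : ((p:ℝ)^α)⁻¹ < 1 := inv_lt_one_of_one_lt₀ hX1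
    have a2 : ((p:ℝ))⁻¹ < 1 := inv_lt_one_of_one_lt₀ hP1
    have a3 : (0:ℝ) < ((p:ℝ)^α)⁻¹ := by positivity
    have a4 : (0:ℝ) < ((p:ℝ))⁻¹ := by positivity
    have : ((p:ℝ) ^ α)⁻¹ * ((p:ℝ))⁻¹ < 1 := by nlinarith
    exact sub_ne_zero.2 (ne_of_gt this)
  have hcoef : ((1 - (p:ℝ)^α) / (1 - ((p:ℝ)^α)⁻¹ * ((p:ℝ))⁻¹))
        * ( -((p:ℝ)^(-α*(n:ℝ)) / p)
            - (1 - 1/(p:ℝ)) * ((p:ℝ)^(-α*(n:ℝ)) * ((p:ℝ)^α)⁻¹ / (1 - ((p:ℝ)^α)⁻¹)) )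
      = ((p:ℝ)^(-α*(n:ℝ)) * ((p:ℝ))⁻¹)
          * (((p:ℝ)^α + (p:ℝ) - 2) / (1 - ((p:ℝ)^α)⁻¹ * ((p:ℝ))⁻¹)) := by
    have hx1 : (p:ℝ)^α - 1 ≠ 0 := sub_ne_zero.2 (ne_of_gt hX1)
    have hxp1 : (p:ℝ)^α * (p:ℝ) - 1 ≠ 0 := by
      have : 1 < (p:ℝ)^α * (p:ℝ) := by nlinarith
      exact sub_ne_zero.2 (ne_of_gt this)
    have hr1' : (1 - ((p:ℝ)^α)⁻¹) = ((p:ℝ)^α - 1) / (p:ℝ)^α := by field_simp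
    have hr2' : (1 - ((p:ℝ)^α)⁻¹ * ((p:ℝ))⁻¹)
        = ((p:ℝ)^α * (p:ℝ) - 1) / ((p:ℝ)^α * (p:ℝ)) := by field_simp
    rw [hr1', hr2']
    field_simp
    ring
  linear_combination (u (sph p n)) * hcoef
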